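/- In the common-priority model, for any preference profile and any round limit T, the set of students matched to their first choice under the TCDM with T+1 rounds and straightforward strategies is a subset of the set of students matched to their first choice under the TCDM with T rounds. -/

import Mathlib

open Finset
open scoped Classical

/-- A common-priority college admissions market: `n` students (index `0` is the
highest priority / highest score), `m` colleges with capacities `q`, and for each
student an injective ranking of the options in `Option (Fin m)` (`none` = being
unassigned / matched to oneself); a lower rank means more preferred. -/
structure Market (n m : ℕ) where
  q : Fin m → ℕ
  rank : Fin n → Option (Fin m) → ℕ
  rank_inj : ∀ i, Function.Injective (rank i)

namespace Market

variable {n m : ℕ}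

/-- `i` strictly prefers option `a` to option `b`. -/
def Prefers (M : Market n m) (i : Fin n) (a b : Option (Fin m)) : Prop :=
  M.rank i a < M.rank i b

/-- A matching: each student gets a college or `none`, capacities respected. -/
def IsMatching (M : Market n m) (μ : Fin n → Option (Fin m)) : Prop :=
  ∀ c : Fin m, (univ.filter fun i => μ i = some c).card ≤ M.q c

/-- Individual rationality. -/
def IR (M : Market n m) (μ : Fin n → Option (Fin m)) : Prop :=
  ∀ i c, μ i = some c → M.Prefers i (some c) none

/-- `(i, c)` blocks `μ`: `i` prefers `c` to her assignment and `c` has a free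
seat or holds a student of strictly lower priority. -/
def Blocks (M : Market n m) (μ : Fin n → Option (Fin m)) (i : Fin n) (c : Fin m) : Prop :=
  M.Prefers i (some c) (μ i) ∧
    ((univ.filter fun j => μ j = some c).card < M.q c ∨ ∃ j, μ j = some c ∧ i < j)

/-- Stability: a matching, individually rational, with no blocking pair. -/
def Stable (M : Market n m) (μ : Fin n → Option (Fin m)) : Prop :=
  M.IsMatching μ ∧ M.IR μ ∧ ∀ i c, ¬ M.Blocks μ i c

/-- Given an application profile, student `i` is tentatively held: she applies to
some college `c` and fewer than `q c` higher-priority students apply to `c`. -/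
def Held (M : Market n m) (app : Fin n → Option (Fin m)) (i : Fin n) : Prop :=
  ∃ c, app i = some c ∧ (univ.filter fun j => app j = some c ∧ j < i).card < M.q c

/-- The tentative matching induced by an application profile. -/
noncomputable def tentative (M : Market n m) (app : Fin n → Option (Fin m)) (i : Fin n) :
    Option (Fin m) :=
  if M.Held app i then app i else none

/-- `i` meets the current cutoff of `c`: `c` has a free seat in the tentative
matching, or tentatively holds a student of lower priority than `i`. -/
def Feasible (M : Market n m) (app : Fin n → Option (Fin m)) (i : Fin n) (c : Fin m) : Prop :=
  (univ.filter fun j => M.tentative app j = some c).card < M.q c ∨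
    ∃ j, M.tentative app j = some c ∧ i < j

/-- The option `o` is available to `i`: `none` always is, a college iff `i`
meets its cutoff. -/
def FeasibleOpt (M : Market n m) (app : Fin n → Option (Fin m)) (i : Fin n)
    (o : Option (Fin m)) : Prop :=
  o = none ∨ ∃ c, o = some c ∧ M.Feasible app i c

/-- One round of simultaneous straightforward revision: students who are not
rejected keep their application; every rejected student applies to her most
preferred option among those whose cutoff she meets. -/
def Step (M : Market n m) (app app' : Fin n → Option (Fin m)) : Prop :=
  ∀ i,
    (M.tentative app i = app i → app' i = app i) ∧
    (M.tentative app i ≠ app i →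
      M.FeasibleOpt app i (app' i) ∧
        ∀ o, M.FeasibleOpt app i o → M.rank i (app' i) ≤ M.rank i o)

/-- A run of the TCDM under straightforward strategies: `app t` is the profile of
applications in round `t + 1`; in round one every student applies to her most
preferred option, and each later round is a straightforward revision.  The
outcome of the TCDM with round limit `T ≥ 1` is `M.tentative (app (T - 1))`. -/
def IsRun (M : Market n m) (app : ℕ → Fin n → Option (Fin m)) : Prop :=
  (∀ i o, M.rank i (app 0 i) ≤ M.rank i o) ∧ ∀ t, M.Step (app t) (app (t + 1))

/-- Admission cutoff of college `c` (student `i` has score `n - i`): the lowest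
score among tentatively held students if `c` is at capacity, `0` otherwise. -/
noncomputable def cutoff (M : Market n m) (app : Fin n → Option (Fin m)) (c : Fin m) : ℕ :=
  if h : M.q c ≤ (univ.filter fun j => M.tentative app j = some c).card ∧
      (univ.filter fun j => M.tentative app j = some c).Nonempty then
    n - ((univ.filter fun j => M.tentative app j = some c).max' h.2 : ℕ)
  else 0

/-- Serial dictatorship outcome: in priority order each student receives her most
preferred option among `none` and the colleges not yet filled by
higher-priority students. -/
def IsSerialDictatorship (M : Market n m) (μ : Fin n → Option (Fin m)) : Prop :=
  ∀ i,
    (μ i = none ∨ ∃ c, μ i = some c ∧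
        (univ.filter fun j => j < i ∧ μ j = some c).card < M.q c) ∧
    ∀ o, (o = none ∨ ∃ c, o = some c ∧
        (univ.filter fun j => j < i ∧ μ j = some c).card < M.q c) →
      M.rank i (μ i) ≤ M.rank i o

end Market

/-- The market induced by capacities `q` and a profile `P` of strict preferences
over colleges (every college acceptable, `none` ranked last), where the
preference order of student `i` ranks college `c` in position `P i c`. -/
noncomputable def mkMarket {n m : ℕ} (q : Fin m → ℕ) (P : Fin n → Equiv.Perm (Fin m)) :
    Market n m where
  q := q
  rank := fun i o => o.elim m fun c => (P i c : ℕ)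
  rank_inj := by
    intro i a b h
    match a, b with
    | none, none => rfl
    | none, some c =>
      simp only [Option.elim] at h
      exact absurd h.symm (Nat.ne_of_lt (P i c).isLt)
    | some c, none =>
      simp only [Option.elim] at h
      exact absurd h (Nat.ne_of_lt (P i c).isLt)
    | some c, some d =>
      simp only [Option.elim] at h
      exact congrArg some ((P i).injective (Fin.val_injective h))

/-!
Let `c` be the first choice of student `i`. In every round, `i` either applies to `c` or misses
its cutoff: once `c` tentatively holds `q c` students of priority at least that of `i` (which is
what rejecting `i`, or `i` missing the cutoff, amounts to), those students are not rejected, keep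
applying to `c` in the next round, and so keep `i` out. A student rejected in round `T` applies in
round `T + 1` only to a college whose cutoff she meets, so if `i` is held at `c` in round `T + 1`,
she was not rejected in round `T` and applied to `c` then as well.
-/

theorem Finset.card_filter_card_filter_lt_lt {α : Type*} [LinearOrder α] (s : Finset α)
    (q : ℕ) : #{j ∈ s | #{k ∈ s | k < j} < q} = min q #s := by
  induction s using Finset.induction_on_max with
  | empty => simp
  | insert a s ha ih =>
    have has : a ∉ s := fun h => lt_irrefl a (ha a h)
    have hpred : ∀ j ∈ s, {k ∈ insert a s | k < j} = {k ∈ s | k < j} := by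
      intro j hj
      rw [filter_insert, if_neg (not_lt.2 (ha j hj).le)]
    have hpred_a : {k ∈ insert a s | k < a} = s := by
      rw [filter_insert, if_neg (lt_irrefl a), filter_true_of_mem ha]
    rw [filter_insert, hpred_a, filter_congr fun j hj => by rw [hpred j hj],
      card_insert_of_notMem has]
    split_ifs with hq
    · rw [card_insert_of_notMem fun h => has (mem_filter.1 h).1, ih]
      omega
    · omega

namespace Market

variable {n m : ℕ} {M : Market n m} {app app' : Fin n → Option (Fin m)} {i : Fin n} {c : Fin m}

theorem tentative_eq_some_iff {j : Fin n} :
    M.tentative app j = some c ↔ app j = some c ∧ #{k | app k = some c ∧ k < j} < M.q c := by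
  unfold tentative Held
  split_ifs with hH
  · refine ⟨fun hj => ⟨hj, ?_⟩, And.left⟩
    obtain ⟨c', hc', hcard⟩ := hH
    obtain rfl : c = c' := Option.some.inj (hj.symm.trans hc')
    exact hcard
  · exact ⟨False.elim, fun hj => hH ⟨c, hj⟩⟩

theorem le_card_tentative (h : M.q c ≤ #{j | app j = some c}) :
    M.q c ≤ #{j | M.tentative app j = some c} := by
  have hheld : (univ.filter fun j => M.tentative app j = some c) =
      ({j ∈ {k | app k = some c} | #{k ∈ {k | app k = some c} | k < j} < M.q c} :
        Finset (Fin n)) := by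
    ext j
    simp only [mem_filter, mem_univ, true_and, filter_filter, tentative_eq_some_iff]
  rw [hheld, card_filter_card_filter_lt_lt, min_eq_left h]

theorem not_feasible_of_le_card (h : M.q c ≤ #{j | app j = some c ∧ j ≤ i}) :
    ¬ M.Feasible app i c := by
  rintro (hfree | ⟨j, hj, hij⟩)
  · refine (le_card_tentative (h.trans (card_le_card ?_))).not_gt hfree
    exact monotone_filter_right _ fun _ _ => And.left
  · refine ((tentative_eq_some_iff.1 hj).2).not_ge (h.trans (card_le_card ?_))
    exact monotone_filter_right _ fun _ _ hk => ⟨hk.1, hk.2.trans_lt hij⟩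

theorem not_feasible_of_not_held (hc : app i = some c) (hH : ¬ M.Held app i) :
    ¬ M.Feasible app i c := by
  have hahead : M.q c ≤ #{j | app j = some c ∧ j < i} :=
    not_lt.1 fun hlt => hH ⟨c, hc, hlt⟩
  exact not_feasible_of_le_card
    (hahead.trans (card_le_card (monotone_filter_right _ fun _ _ hk => ⟨hk.1, hk.2.le⟩)))

theorem Step.not_feasible (hs : M.Step app app') (h : ¬ M.Feasible app i c) :
    ¬ M.Feasible app' i c := by
  obtain ⟨hfull, hbelow⟩ := not_or.1 h
  refine not_feasible_of_le_card ((not_lt.1 hfull).trans (card_le_card fun j hj => ?_))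
  have hj : M.tentative app j = some c := (mem_filter.1 hj).2
  have happ : app j = some c := (tentative_eq_some_iff.1 hj).1
  refine mem_filter.2 ⟨mem_univ j, ?_, not_lt.1 fun hij => hbelow ⟨j, hj, hij⟩⟩
  rw [(hs j).1 (hj.trans happ.symm), happ]

theorem Step.feasible_of_not_kept (hs : M.Step app app') (hrej : M.tentative app i ≠ app i)
    (hc : app' i = some c) : M.Feasible app i c := by
  obtain hnone | ⟨c', hc', hfeas⟩ := ((hs i).2 hrej).1
  · exact absurd (hc.symm.trans hnone) (Option.some_ne_none c)
  · rwa [Option.some_inj.1 (hc.symm.trans hc')]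

theorem IsRun.eq_first_choice_or_not_feasible {app : ℕ → Fin n → Option (Fin m)}
    (hrun : M.IsRun app) (htop : ∀ o, M.rank i (some c) ≤ M.rank i o) (t : ℕ) :
    app t i = some c ∨ ¬ M.Feasible (app t) i c := by
  induction t with
  | zero => exact .inl (M.rank_inj i (le_antisymm (hrun.1 i (some c)) (htop (app 0 i))))
  | succ t ih =>
    by_cases hc : app t i = some c ∧ M.Held (app t) i
    · left
      rw [(hrun.2 t i).1 (if_pos hc.2), hc.1]
    · right
      refine (hrun.2 t).not_feasible ?_
      rcases ih with hc' | hnf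
      · exact not_feasible_of_not_held hc' fun hH => hc ⟨hc', hH⟩
      · exact hnf

end Market

theorem tcdm_first_choice_set_antitone_general (n m : ℕ) (M : Market n m)
    (app : ℕ → Fin n → Option (Fin m)) (hrun : M.IsRun app)
    (T : ℕ) (i : Fin n) (c : Fin m)
    (htop : ∀ o : Option (Fin m), M.rank i (some c) ≤ M.rank i o)
    (h : M.tentative (app T) i = some c) :
    M.tentative (app (T - 1)) i = some c := by
  cases T with
  | zero => exact h
  | succ t =>
    rw [Nat.add_sub_cancel]
    have happ : app (t + 1) i = some c := (Market.tentative_eq_some_iff.1 h).1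
    by_cases hkept : M.tentative (app t) i = app t i
    · rw [hkept, ← (hrun.2 t i).1 hkept, happ]
    · have hfeas : M.Feasible (app t) i c := (hrun.2 t).feasible_of_not_kept hkept happ
      obtain hfirst | hnf := hrun.eq_first_choice_or_not_feasible htop t
      · exact absurd hfeas (Market.not_feasible_of_not_held hfirst fun hH => hkept (if_pos hH))
      · exact absurd hfeas hnf

/-- for any preference profile and round limit `T ≥ 1`, every
student matched to her first choice by the TCDM with `T + 1` rounds (outcome
`M.tentative (app T)`) is also matched to her first choice by the TCDM with `T`
rounds (outcome `M.tentative (app (T - 1))`). -/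
theorem tcdm_first_choice_set_antitone (n m : ℕ) (M : Market n m)
    (app : ℕ → Fin n → Option (Fin m)) (hrun : M.IsRun app)
    (T : ℕ) (hT : 1 ≤ T) (i : Fin n) (c : Fin m)
    (htop : ∀ o : Option (Fin m), M.rank i (some c) ≤ M.rank i o)
    (h : M.tentative (app T) i = some c) :
    M.tentative (app (T - 1)) i = some c :=
  tcdm_first_choice_set_antitone_general n m M app hrun T i c htop h
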